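/- Let A and B be distinct even positive-definite unimodular lattices of rank 24 in a common ambient rational quadratic space that are neighbors, with D = A ∩ B of index 2 in each. Then there exists a unique odd positive-definite unimodular lattice N of rank 24 containing D with index 2; moreover N is a neighbor of both A and B, and A, B, N are precisely the unimodular lattices containing D with index 2. -/
import Mathlib


open scoped BigOperators

namespace Niemeier

variable {V : Type*} [AddCommGroup V] [Module ℚ V]
variable {W : Type*} [AddCommGroup W] [Module ℚ W]

/-- The dual lattice of a `ℤ`-submodule `L` of a rational vector space `V` with respect to the
bilinear form `B`: all vectors pairing integrally with every element of `L`. -/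
def dualLattice (B : V →ₗ[ℚ] V →ₗ[ℚ] ℚ) (L : Submodule ℤ V) : Submodule ℤ V where
  carrier := {x | ∀ y ∈ L, ∃ n : ℤ, B x y = n}
  zero_mem' := by
    intro y hy
    exact ⟨0, by simp⟩
  add_mem' := by
    intro a b ha hb y hy
    obtain ⟨m, hm⟩ := ha y hy
    obtain ⟨k, hk⟩ := hb y hy
    exact ⟨m + k, by push_cast [map_add, LinearMap.add_apply, hm, hk]; rfl⟩
  smul_mem' := by
    intro c x hx y hy
    obtain ⟨m, hm⟩ := hx y hy
    refine ⟨c * m, ?_⟩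
    have h1 : B (c • x) y = c • (B x y) := by
      rw [map_zsmul]; rfl
    rw [h1, hm, zsmul_eq_mul]
    push_cast
    ring

/-- `B` is a symmetric positive-definite bilinear form. -/
def IsPosDefSymm (B : V →ₗ[ℚ] V →ₗ[ℚ] ℚ) : Prop :=
  (∀ x y, B x y = B y x) ∧ ∀ x : V, x ≠ 0 → 0 < B x x

/-- `L` is a (full-rank, integral) lattice in `V` with respect to `B`. -/
structure IsIntegralLattice (B : V →ₗ[ℚ] V →ₗ[ℚ] ℚ) (L : Submodule ℤ V) : Prop where
  fg : L.FG
  spans : Submodule.span ℚ (L : Set V) = ⊤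
  integral : L ≤ dualLattice B L

/-- `L` is unimodular: it coincides with its dual lattice. -/
def IsUnimodular (B : V →ₗ[ℚ] V →ₗ[ℚ] ℚ) (L : Submodule ℤ V) : Prop :=
  L = dualLattice B L

/-- `L` is an even lattice: all norms are even integers. -/
def IsEvenLat (B : V →ₗ[ℚ] V →ₗ[ℚ] ℚ) (L : Submodule ℤ V) : Prop :=
  ∀ v ∈ L, ∃ n : ℤ, B v v = 2 * n

/-- `L` is an odd lattice: some vector has odd (integer) norm. -/
def IsOddLat (B : V →ₗ[ℚ] V →ₗ[ℚ] ℚ) (L : Submodule ℤ V) : Prop :=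
  ∃ v ∈ L, ∃ n : ℤ, B v v = 2 * n + 1

/-- An odd Niemeier lattice: an odd positive-definite unimodular integral lattice of rank 24
(positive-definiteness of `B` is a separate hypothesis). -/
def IsOddNiemeier (B : V →ₗ[ℚ] V →ₗ[ℚ] ℚ) (N : Submodule ℤ V) : Prop :=
  IsIntegralLattice B N ∧ IsUnimodular B N ∧ IsOddLat B N ∧ Module.finrank ℚ V = 24

/-- `D` is a subgroup of index two in `L`. -/
def IndexTwo (D L : Submodule ℤ V) : Prop :=
  D ≤ L ∧ ∃ a ∈ L, a ∉ D ∧ ∀ x ∈ L, x ∈ D ∨ x - a ∈ D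

/-- Two lattices are neighbors if their intersection has index two in each of them. -/
def Neighbors (L M : Submodule ℤ V) : Prop :=
  IndexTwo (L ⊓ M) L ∧ IndexTwo (L ⊓ M) M

/-- `E` is an even neighbor of the odd Niemeier lattice `N`: an even unimodular integral
lattice (in the same ambient space) which is a neighbor of `N`. -/
def IsEvenNeighbor (B : V →ₗ[ℚ] V →ₗ[ℚ] ℚ) (N E : Submodule ℤ V) : Prop :=
  IsIntegralLattice B E ∧ IsUnimodular B E ∧ IsEvenLat B E ∧ Neighbors N E

/-- The minimum norm of `L` equals `m`. -/
def HasMinNorm (B : V →ₗ[ℚ] V →ₗ[ℚ] ℚ) (L : Submodule ℤ V) (m : ℚ) : Prop :=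
  (∃ v ∈ L, v ≠ 0 ∧ B v v = m) ∧ ∀ v ∈ L, v ≠ 0 → m ≤ B v v

/-- `N` contains a sublattice isometric to the rank-6 lattice `L⁺`, i.e. there are vectors
`h, a 0, …, a 4` in `N` realizing the Gram matrix of `L⁺`. -/
def ContainsLPlus (B : V →ₗ[ℚ] V →ₗ[ℚ] ℚ) (N : Submodule ℤ V) : Prop :=
  ∃ h ∈ N, ∃ a : Fin 5 → V, (∀ i, a i ∈ N) ∧
    B h h = 2 ∧ (∀ i, B h (a i) = 1) ∧ (∀ i, B (a i) (a i) = 3) ∧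
    ∀ i j, i ≠ j → B (a i) (a j) = 0

/-- Two lattices (in possibly different ambient spaces, with forms `B` and `C`) are isometric:
there is a `ℤ`-linear bijection between them preserving the bilinear forms. -/
def LatticeIsometric (B : V → V → ℚ) (C : W → W → ℚ)
    (L : Submodule ℤ V) (M : Submodule ℤ W) : Prop :=
  ∃ f : L ≃ₗ[ℤ] M, ∀ x y : L, C (f x) (f y) = B x y

/-- The standard dot product on `ℚⁿ`. -/
def stdDot (n : ℕ) : (Fin n → ℚ) → (Fin n → ℚ) → ℚ := fun x y => ∑ i, x i * y i

/-- The orthogonal sum of two bilinear forms. -/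
def prodForm (B : V → V → ℚ) (C : W → W → ℚ) : V × W → V × W → ℚ :=
  fun p q => B p.1 q.1 + C p.2 q.2

/-- A vector in `ℚⁿ` has integer coordinates. -/
def IsIntVec {n : ℕ} (x : Fin n → ℚ) : Prop := ∀ i, ∃ m : ℤ, x i = m

/-- The root lattice `Dₙ = {x ∈ ℤⁿ : ∑ xᵢ even}`. -/
def latD (n : ℕ) : Submodule ℤ (Fin n → ℚ) where
  carrier := {x | IsIntVec x ∧ ∃ k : ℤ, ∑ i, x i = 2 * k}
  zero_mem' := by
    refine ⟨fun i => ⟨0, by simp⟩, 0, by simp⟩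
  add_mem' := by
    rintro a b ⟨ha, k₁, hk₁⟩ ⟨hb, k₂, hk₂⟩
    refine ⟨fun i => ?_, k₁ + k₂, ?_⟩
    · obtain ⟨m, hm⟩ := ha i
      obtain ⟨m', hm'⟩ := hb i
      exact ⟨m + m', by simp [Pi.add_apply, hm, hm']⟩
    · simp only [Pi.add_apply, Finset.sum_add_distrib, hk₁, hk₂]
      push_cast
      ring
  smul_mem' := by
    rintro c x ⟨hx, k, hk⟩
    refine ⟨fun i => ?_, c * k, ?_⟩
    · obtain ⟨m, hm⟩ := hx i
      exact ⟨c * m, by simp [Pi.smul_apply, hm, zsmul_eq_mul]⟩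
    · have : ∑ i, (c • x) i = c • ∑ i, x i := by
        simp [Pi.smul_apply, Finset.smul_sum]
      rw [this, hk, zsmul_eq_mul]
      push_cast
      ring

/-- The root lattice `Aₙ = {x ∈ ℤⁿ⁺¹ : ∑ xᵢ = 0}`. -/
def latA (n : ℕ) : Submodule ℤ (Fin (n + 1) → ℚ) where
  carrier := {x | IsIntVec x ∧ ∑ i, x i = 0}
  zero_mem' := ⟨fun i => ⟨0, by simp⟩, by simp⟩
  add_mem' := by
    rintro a b ⟨ha, hka⟩ ⟨hb, hkb⟩
    refine ⟨fun i => ?_, ?_⟩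
    · obtain ⟨m, hm⟩ := ha i
      obtain ⟨m', hm'⟩ := hb i
      exact ⟨m + m', by simp [Pi.add_apply, hm, hm']⟩
    · simp [Pi.add_apply, Finset.sum_add_distrib, hka, hkb]
  smul_mem' := by
    rintro c x ⟨hx, hk⟩
    refine ⟨fun i => ?_, ?_⟩
    · obtain ⟨m, hm⟩ := hx i
      exact ⟨c * m, by simp [Pi.smul_apply, hm, zsmul_eq_mul]⟩
    · have : ∑ i, (c • x) i = c • ∑ i, x i := by
        simp [Pi.smul_apply, Finset.smul_sum]
      rw [this, hk, smul_zero]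

/-- The root lattice `E₈ = D₈ + ℤ·(½,…,½)`. -/
def latE8 : Submodule ℤ (Fin 8 → ℚ) :=
  latD 8 ⊔ Submodule.span ℤ {fun _ => (1 : ℚ) / 2}

/-- The root sublattice of `E`: the `ℤ`-span of its vectors of norm 2. -/
def rootSublattice (B : V →ₗ[ℚ] V →ₗ[ℚ] ℚ) (E : Submodule ℤ V) : Submodule ℤ V :=
  Submodule.span ℤ {v : V | v ∈ E ∧ B v v = 2}

/-- The set of even-norm vectors of `N` (the even sublattice, as a set). -/
def evenSet (B : V →ₗ[ℚ] V →ₗ[ℚ] ℚ) (N : Submodule ℤ V) : Set V :=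
  {x | x ∈ N ∧ ∃ n : ℤ, B x x = 2 * n}

/-- The unordered pair of root sublattices of `E₁` and `E₂` is isometric to the pair
`(M₁, M₂)`. -/
def RootPairIso {W₁ W₂ : Type*} [AddCommGroup W₁] [Module ℚ W₁]
    [AddCommGroup W₂] [Module ℚ W₂]
    (B : V →ₗ[ℚ] V →ₗ[ℚ] ℚ) (E₁ E₂ : Submodule ℤ V)
    (C₁ : W₁ → W₁ → ℚ) (M₁ : Submodule ℤ W₁)
    (C₂ : W₂ → W₂ → ℚ) (M₂ : Submodule ℤ W₂) : Prop :=
  (LatticeIsometric (fun x y => B x y) C₁ (rootSublattice B E₁) M₁ ∧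
    LatticeIsometric (fun x y => B x y) C₂ (rootSublattice B E₂) M₂) ∨
  (LatticeIsometric (fun x y => B x y) C₂ (rootSublattice B E₁) M₂ ∧
    LatticeIsometric (fun x y => B x y) C₁ (rootSublattice B E₂) M₁)

/-- The unordered pair of root sublattices of `E₁`, `E₂` is one of the four exceptional pairs
`{E₈³, D₈³}`, `{D₁₆⊕E₈, A₁₅⊕D₉}`, `{D₁₂², A₁₂²}`, `{D₂₄, A₂₄}`. -/
def IsExceptionalPair (B : V →ₗ[ℚ] V →ₗ[ℚ] ℚ) (E₁ E₂ : Submodule ℤ V) : Prop :=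
  RootPairIso B E₁ E₂
    (prodForm (stdDot 8) (prodForm (stdDot 8) (stdDot 8))) (latE8.prod (latE8.prod latE8))
    (prodForm (stdDot 8) (prodForm (stdDot 8) (stdDot 8))) ((latD 8).prod ((latD 8).prod (latD 8))) ∨
  RootPairIso B E₁ E₂
    (prodForm (stdDot 16) (stdDot 8)) ((latD 16).prod latE8)
    (prodForm (stdDot 16) (stdDot 9)) ((latA 15).prod (latD 9)) ∨
  RootPairIso B E₁ E₂
    (prodForm (stdDot 12) (stdDot 12)) ((latD 12).prod (latD 12))
    (prodForm (stdDot 13) (stdDot 13)) ((latA 12).prod (latA 12)) ∨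
  RootPairIso B E₁ E₂
    (stdDot 24) (latD 24)
    (stdDot 25) (latA 24)

private lemma mem_dualLattice {B : V →ₗ[ℚ] V →ₗ[ℚ] ℚ} {L : Submodule ℤ V} {x : V} :
    x ∈ dualLattice B L ↔ ∀ y ∈ L, ∃ n : ℤ, B x y = n := Iff.rfl

private lemma int_or_half {q : ℚ} {t : ℤ} (h : 2 * q = t) :
    (∃ k : ℤ, q = k) ∨ (∃ k : ℤ, q = k + 1/2) := by
  rcases Int.even_or_odd t with ⟨r, hr⟩ | ⟨r, hr⟩
  · left; refine ⟨r, ?_⟩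
    have : (t : ℚ) = 2 * r := by exact_mod_cast (by omega : t = 2 * r)
    linarith
  · right; refine ⟨r, ?_⟩
    have : (t : ℚ) = 2 * r + 1 := by exact_mod_cast hr
    linarith

set_option maxHeartbeats 2000000 in
/-- If `A ≠ A'` are even positive-definite unimodular rank-24 neighbors with
`D = A ⊓ A'` of index 2 in each, then there is a unique odd positive-definite unimodular
rank-24 lattice `N ⊇ D` with index 2; moreover `N` neighbors both `A` and `A'`, and
`A`, `A'`, `N` are precisely the unimodular integral lattices containing `D` with index 2. -/
theorem stmt12 {V : Type*} [AddCommGroup V] [Module ℚ V]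
    (B : V →ₗ[ℚ] V →ₗ[ℚ] ℚ) (hB : IsPosDefSymm B)
    (hdim : Module.finrank ℚ V = 24)
    (A A' : Submodule ℤ V)
    (hA : IsIntegralLattice B A ∧ IsUnimodular B A ∧ IsEvenLat B A)
    (hA' : IsIntegralLattice B A' ∧ IsUnimodular B A' ∧ IsEvenLat B A')
    (hne : A ≠ A') (hnb : Neighbors A A') :
    ∃ N : Submodule ℤ V,
      (IsIntegralLattice B N ∧ IsUnimodular B N ∧ IsOddLat B N ∧ IndexTwo (A ⊓ A') N) ∧
      (∀ N' : Submodule ℤ V,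
        (IsIntegralLattice B N' ∧ IsUnimodular B N' ∧ IsOddLat B N' ∧ IndexTwo (A ⊓ A') N') →
        N' = N) ∧
      Neighbors N A ∧ Neighbors N A' ∧
      ∀ L : Submodule ℤ V,
        (IsIntegralLattice B L ∧ IsUnimodular B L ∧ IndexTwo (A ⊓ A') L) ↔
          (L = A ∨ L = A' ∨ L = N) := by
  obtain ⟨⟨hAfg, hAsp, hAint⟩, hAuni, hAeven⟩ := hA
  obtain ⟨⟨hA'fg, hA'sp, hA'int⟩, hA'uni, hA'even⟩ := hA'
  obtain ⟨⟨hDleA, a, haA, haD, hcovA⟩, ⟨hDleA', a', ha'A', ha'D, hcovA'⟩⟩ := hnb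
  have hsym := hB.1
  have hiA : ∀ x ∈ A, ∀ y ∈ A, ∃ n : ℤ, B x y = n := fun x hx => hAint hx
  have hiA' : ∀ x ∈ A', ∀ y ∈ A', ∃ n : ℤ, B x y = n := fun x hx => hA'int hx
  have h2a : a + a ∈ A ⊓ A' := by
    rcases hcovA (a + a) (add_mem haA haA) with h | h
    · exact h
    · exact absurd (by simpa using h) haD
  have h2a' : a' + a' ∈ A ⊓ A' := by
    rcases hcovA' (a' + a') (add_mem ha'A' ha'A') with h | h
    · exact h
    · exact absurd (by simpa using h) ha'D
  -- B a a' is half an odd integer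
  have haa' : ∃ u : ℤ, 2 * B a a' = 2 * u + 1 := by
    obtain ⟨s, hs⟩ := hiA a haA (a' + a') (hDleA h2a')
    have hs2 : 2 * B a a' = (s : ℚ) := by rw [← hs, map_add]; ring
    rcases int_or_half hs2 with ⟨k, hq⟩ | ⟨k, hq⟩
    · exfalso
      apply ha'D
      have ha'mem : a' ∈ A := by
        rw [hAuni]
        show ∀ y ∈ A, ∃ n : ℤ, B a' y = n
        intro y hy
        rcases hcovA y hy with h | h
        · exact hiA' a' ha'A' y (hDleA' h)
        · obtain ⟨r, hr⟩ := hiA' a' ha'A' (y - a) (hDleA' h)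
          refine ⟨r + k, ?_⟩
          rw [map_sub] at hr
          have hsy : B a' a = B a a' := hsym a' a
          push_cast
          linarith
      exact Submodule.mem_inf.mpr ⟨ha'mem, ha'A'⟩
    · exact ⟨k, by rw [hq] at hs2 ⊢; push_cast; linarith⟩
  obtain ⟨u, hu⟩ := haa'
  obtain ⟨pa, hpa⟩ := hAeven a haA
  obtain ⟨pa', hpa'⟩ := hA'even a' ha'A'
  obtain ⟨w, hw⟩ : ∃ w : V, w = a + a' := ⟨_, rfl⟩
  obtain ⟨N, hN⟩ : ∃ N : Submodule ℤ V, N = (A ⊓ A') ⊔ Submodule.span ℤ {w} := ⟨_, rfl⟩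
  have hDleN : A ⊓ A' ≤ N := hN ▸ le_sup_left
  have h2w : w + w ∈ A ⊓ A' := by
    have hx : w + w = (a + a) + (a' + a') := by rw [hw]; abel
    rw [hx]; exact add_mem h2a h2a'
  have memN : ∀ x : V, x ∈ N ↔ (x ∈ A ⊓ A' ∨ x - w ∈ A ⊓ A') := by
    intro x
    constructor
    · intro hx
      rw [hN] at hx
      rcases Submodule.mem_sup.mp hx with ⟨d, hd, z, hz, rfl⟩
      rcases Submodule.mem_span_singleton.mp hz with ⟨c, rfl⟩
      rcases Int.even_or_odd c with ⟨r, hr⟩ | ⟨r, hr⟩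
      · left
        have h1 : c • w = r • (w + w) := by rw [hr, add_smul, smul_add]
        rw [h1]
        exact add_mem hd (Submodule.smul_mem _ _ h2w)
      · right
        have h1 : c • w = r • (w + w) + w := by
          rw [hr, add_smul, one_smul, two_mul, add_smul, smul_add]
        have h2 : d + c • w - w = d + r • (w + w) := by rw [h1]; abel
        rw [h2]
        exact add_mem hd (Submodule.smul_mem _ _ h2w)
    · rintro (hx | hx)
      · exact hDleN hx
      · have hx2 : x = (x - w) + w := by abel
        rw [hx2]
        rw [hN]
        exact add_mem (le_sup_left (α := Submodule ℤ V) hx)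
          (Submodule.mem_sup_right (Submodule.mem_span_singleton_self w))
  have hwD : w ∉ A ⊓ A' := by
    intro hwmem
    apply ha'D
    refine Submodule.mem_inf.mpr ⟨?_, ha'A'⟩
    have h1 : a' = w - a := by rw [hw]; abel
    rw [h1]
    exact sub_mem (Submodule.mem_inf.mp hwmem).1 haA
  have hwN : w ∈ N := (memN w).mpr (Or.inr (by rw [sub_self]; exact zero_mem _))
  have hBaD : ∀ y ∈ A ⊓ A', ∃ n : ℤ, B a y = n := fun y hy => hiA a haA y (hDleA hy)
  have hBa'D : ∀ y ∈ A ⊓ A', ∃ n : ℤ, B a' y = n := fun y hy => hiA' a' ha'A' y (hDleA' hy)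
  have hBwD : ∀ y ∈ A ⊓ A', ∃ n : ℤ, B w y = n := by
    intro y hy
    obtain ⟨p, hp⟩ := hBaD y hy
    obtain ⟨q, hq⟩ := hBa'D y hy
    refine ⟨p + q, ?_⟩
    rw [hw]
    simp only [map_add, LinearMap.add_apply]
    push_cast
    linarith
  have hBww : ∃ m : ℤ, B w w = 2 * m + 1 := by
    refine ⟨pa + pa' + u, ?_⟩
    rw [hw]
    simp only [map_add, LinearMap.add_apply]
    have h1 : B a' a = B a a' := hsym a' a
    push_cast
    linarith
  have memD_of : ∀ x : V, (∀ y ∈ A ⊓ A', ∃ n : ℤ, B x y = n) →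
      (∃ n : ℤ, B x a = n) → (∃ n : ℤ, B x a' = n) → x ∈ A ⊓ A' := by
    rintro x hxD ⟨p, hp⟩ ⟨q, hq⟩
    refine Submodule.mem_inf.mpr ⟨?_, ?_⟩
    · rw [hAuni]
      show ∀ y ∈ A, ∃ n : ℤ, B x y = n
      intro y hy
      rcases hcovA y hy with h | h
      · exact hxD y h
      · obtain ⟨r, hr⟩ := hxD (y - a) h
        refine ⟨r + p, ?_⟩
        rw [map_sub] at hr
        push_cast
        linarith
    · rw [hA'uni]
      show ∀ y ∈ A', ∃ n : ℤ, B x y = n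
      intro y hy
      rcases hcovA' y hy with h | h
      · exact hxD y h
      · obtain ⟨r, hr⟩ := hxD (y - a') h
        refine ⟨r + q, ?_⟩
        rw [map_sub] at hr
        push_cast
        linarith
  have classify : ∀ x : V, (∀ y ∈ A ⊓ A', ∃ n : ℤ, B x y = n) →
      (x ∈ A ⊓ A' ∨ x - a ∈ A ⊓ A' ∨ x - a' ∈ A ⊓ A' ∨ x - w ∈ A ⊓ A') := by
    intro x hx
    have hshift : ∀ v : V, (∀ y ∈ A ⊓ A', ∃ n : ℤ, B v y = n) →
        ∀ y ∈ A ⊓ A', ∃ n : ℤ, B (x - v) y = n := by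
      intro v hv y hy
      obtain ⟨p, hp⟩ := hx y hy
      obtain ⟨q, hq⟩ := hv y hy
      refine ⟨p - q, ?_⟩
      simp only [map_sub, LinearMap.sub_apply]
      push_cast
      linarith
    obtain ⟨s, hs⟩ := hx (a + a) h2a
    obtain ⟨t, ht⟩ := hx (a' + a') h2a'
    have hs2 : 2 * B x a = (s : ℚ) := by rw [← hs, map_add]; ring
    have ht2 : 2 * B x a' = (t : ℚ) := by rw [← ht, map_add]; ring
    rcases int_or_half hs2 with ⟨k, hxa⟩ | ⟨k, hxa⟩ <;>
      rcases int_or_half ht2 with ⟨l, hxa'⟩ | ⟨l, hxa'⟩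
    · exact Or.inl (memD_of x hx ⟨k, hxa⟩ ⟨l, hxa'⟩)
    · -- (int, half) : x is in the coset of a
      refine Or.inr (Or.inl (memD_of (x - a) (hshift a hBaD) ⟨k - 2 * pa, ?_⟩ ⟨l - u, ?_⟩))
      · simp only [map_sub, LinearMap.sub_apply]
        push_cast
        linarith
      · simp only [map_sub, LinearMap.sub_apply]
        push_cast
        linarith
    · -- (half, int) : x is in the coset of a'
      refine Or.inr (Or.inr (Or.inl (memD_of (x - a') (hshift a' hBa'D) ⟨k - u, ?_⟩
        ⟨l - 2 * pa', ?_⟩)))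
      · have h1 : B a' a = B a a' := hsym a' a
        simp only [map_sub, LinearMap.sub_apply]
        push_cast
        linarith
      · simp only [map_sub, LinearMap.sub_apply]
        push_cast
        linarith
    · -- (half, half) : x is in the coset of w
      have hwa : B w a = B a a + B a' a := by
        rw [hw]; simp only [map_add, LinearMap.add_apply]
      have hwa' : B w a' = B a a' + B a' a' := by
        rw [hw]; simp only [map_add, LinearMap.add_apply]
      have h1 : B a' a = B a a' := hsym a' a
      refine Or.inr (Or.inr (Or.inr (memD_of (x - w) (hshift w hBwD) ⟨k - 2 * pa - u, ?_⟩
        ⟨l - u - 2 * pa', ?_⟩)))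
      · simp only [map_sub, LinearMap.sub_apply]
        push_cast
        linarith
      · simp only [map_sub, LinearMap.sub_apply]
        push_cast
        linarith
  have hNint : ∀ x ∈ N, ∀ y ∈ N, ∃ n : ℤ, B x y = n := by
    have hDD : ∀ x ∈ A ⊓ A', ∀ y ∈ A ⊓ A', ∃ n : ℤ, B x y = n :=
      fun x hx y hy => hiA x (hDleA hx) y (hDleA hy)
    intro x hx y hy
    rcases (memN x).mp hx with hx' | hx' <;> rcases (memN y).mp hy with hy' | hy'
    · exact hDD x hx' y hy'
    · obtain ⟨p, hp⟩ := hDD x hx' (y - w) hy'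
      obtain ⟨q, hq⟩ := hBwD x hx'
      refine ⟨p + q, ?_⟩
      have h1 : B x y = B x (y - w) + B x w := by rw [map_sub]; ring
      have h2 : B x w = B w x := hsym x w
      push_cast
      linarith
    · obtain ⟨p, hp⟩ := hDD (x - w) hx' y hy'
      obtain ⟨q, hq⟩ := hBwD y hy'
      refine ⟨p + q, ?_⟩
      have h1 : B x y = B (x - w) y + B w y := by
        simp only [map_sub, LinearMap.sub_apply]; ring
      push_cast
      linarith
    · obtain ⟨p, hp⟩ := hDD (x - w) hx' (y - w) hy'
      obtain ⟨q, hq⟩ := hBwD (x - w) hx'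
      obtain ⟨r, hr⟩ := hBwD (y - w) hy'
      obtain ⟨m, hm⟩ := hBww
      refine ⟨p + q + r + (2 * m + 1), ?_⟩
      have h1 : B x y = B (x - w) (y - w) + B w (y - w) + B (x - w) w + B w w := by
        simp only [map_sub, LinearMap.sub_apply]; ring
      have h2 : B (x - w) w = B w (x - w) := hsym _ _
      push_cast
      linarith
  have hNuni : IsUnimodular B N := by
    apply le_antisymm
    · intro x hx
      exact mem_dualLattice.mpr (hNint x hx)
    · intro x hx
      have hxN : ∀ y ∈ N, ∃ n : ℤ, B x y = n := mem_dualLattice.mp hx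
      have hxD : ∀ y ∈ A ⊓ A', ∃ n : ℤ, B x y = n := fun y hy => hxN y (hDleN hy)
      rcases classify x hxD with h | h | h | h
      · exact hDleN h
      · exfalso
        obtain ⟨m, hm⟩ := hxN w hwN
        obtain ⟨r, hr⟩ := hBwD (x - a) h
        have h1 : B x w = B (x - a) w + B a w := by
          simp only [map_sub, LinearMap.sub_apply]; ring
        have h2 : B (x - a) w = B w (x - a) := hsym _ _
        have h3 : B a w = B a a + B a a' := by rw [hw, map_add]
        have hq : (2 * m : ℚ) = 2 * r + 4 * pa + 2 * u + 1 := by push_cast; linarith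
        have hz : (2 * m : ℤ) = 2 * r + 4 * pa + 2 * u + 1 := by exact_mod_cast hq
        omega
      · exfalso
        obtain ⟨m, hm⟩ := hxN w hwN
        obtain ⟨r, hr⟩ := hBwD (x - a') h
        have h1 : B x w = B (x - a') w + B a' w := by
          simp only [map_sub, LinearMap.sub_apply]; ring
        have h2 : B (x - a') w = B w (x - a') := hsym _ _
        have h3 : B a' w = B a' a + B a' a' := by rw [hw, map_add]
        have h4 : B a' a = B a a' := hsym _ _
        have hq : (2 * m : ℚ) = 2 * r + 2 * u + 1 + 4 * pa' := by push_cast; linarith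
        have hz : (2 * m : ℤ) = 2 * r + 2 * u + 1 + 4 * pa' := by exact_mod_cast hq
        omega
      · exact (memN x).mpr (Or.inr h)
  have not_odd_of_even : ∀ L : Submodule ℤ V, IsEvenLat B L → ¬ IsOddLat B L := by
    rintro L hEv ⟨v, hv, k, hk⟩
    obtain ⟨p, hp⟩ := hEv v hv
    have hq : (2 * p : ℚ) = 2 * k + 1 := by push_cast; linarith
    have hz : (2 * p : ℤ) = 2 * k + 1 := by exact_mod_cast hq
    omega
  have eq_of : ∀ (L M : Submodule ℤ V) (m v : V), (A ⊓ A') ≤ L → (A ⊓ A') ≤ M →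
      m ∈ L → v ∈ M → (∀ x ∈ L, x ∈ A ⊓ A' ∨ x - m ∈ A ⊓ A') →
      (∀ x ∈ M, x ∈ A ⊓ A' ∨ x - v ∈ A ⊓ A') → m - v ∈ A ⊓ A' → L = M := by
    intro L M m v hDL hDM hmL hvM hcovL hcovM hmv
    apply le_antisymm
    · intro x hx
      rcases hcovL x hx with h | h
      · exact hDM h
      · have hx2 : x = (x - m) + (m - v) + v := by abel
        rw [hx2]
        exact add_mem (add_mem (hDM h) (hDM hmv)) hvM
    · intro x hx
      rcases hcovM x hx with h | h
      · exact hDL h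
      · have hx2 : x = (x - v) - (m - v) + m := by abel
        rw [hx2]
        exact add_mem (sub_mem (hDL h) (hDL hmv)) hmL
  have hcovN : ∀ x ∈ N, x ∈ A ⊓ A' ∨ x - w ∈ A ⊓ A' := fun x hx => (memN x).mp hx
  have class_L : ∀ L : Submodule ℤ V,
      IsIntegralLattice B L → IndexTwo (A ⊓ A') L → (L = A ∨ L = A' ∨ L = N) := by
    rintro L hLint ⟨hDleL, m, hmL, hmD, hcovL⟩
    have hmDdual : ∀ y ∈ A ⊓ A', ∃ n : ℤ, B m y = n :=
      fun y hy => mem_dualLattice.mp (hLint.integral hmL) y (hDleL hy)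
    rcases classify m hmDdual with h | h | h | h
    · exact absurd h hmD
    · exact Or.inl (eq_of L A m a hDleL hDleA hmL haA hcovL hcovA h)
    · exact Or.inr (Or.inl (eq_of L A' m a' hDleL hDleA' hmL ha'A' hcovL hcovA' h))
    · exact Or.inr (Or.inr (eq_of L N m w hDleL hDleN hmL hwN hcovL hcovN h))
  have hIndexDN : IndexTwo (A ⊓ A') N := ⟨hDleN, w, hwN, hwD, hcovN⟩
  have hNodd : IsOddLat B N := ⟨w, hwN, hBww⟩
  have hDfg : (A ⊓ A').FG := by
    haveI : IsNoetherian ℤ ↥A := isNoetherian_of_fg_of_noetherian A hAfg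
    have h1 : (Submodule.comap A.subtype (A ⊓ A')).FG := IsNoetherian.noetherian _
    have h2 := Submodule.FG.map A.subtype h1
    rwa [Submodule.map_comap_subtype, inf_eq_right.mpr (inf_le_left : A ⊓ A' ≤ A)] at h2
  have hNfg : N.FG := by rw [hN]; exact Submodule.FG.sup hDfg (Submodule.fg_span_singleton w)
  have h2x : ∀ x ∈ A, x + x ∈ A ⊓ A' := by
    intro x hx
    rcases hcovA x hx with h | h
    · exact add_mem h h
    · have hx2 : x + x = (x - a) + (x - a) + (a + a) := by abel
      rw [hx2]
      exact add_mem (add_mem h h) h2a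
  have hDspan : Submodule.span ℚ ((A ⊓ A' : Submodule ℤ V) : Set V) = ⊤ := by
    rw [eq_top_iff, ← hAsp, Submodule.span_le]
    intro x hx
    have h1 : ((2 : ℚ) • x) ∈ (A ⊓ A' : Submodule ℤ V) := by
      have h0 : (2 : ℚ) • x = x + x := two_smul ℚ x
      rw [h0]
      exact h2x x hx
    have h2 : x = (1/2 : ℚ) • ((2 : ℚ) • x) := by rw [smul_smul]; norm_num
    rw [h2]
    exact Submodule.smul_mem _ _ (Submodule.subset_span h1)
  have hNspan : Submodule.span ℚ (N : Set V) = ⊤ := by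
    rw [eq_top_iff, ← hDspan]
    exact Submodule.span_mono (fun x hx => hDleN hx)
  have hNlat : IsIntegralLattice B N :=
    ⟨hNfg, hNspan, fun x hx => mem_dualLattice.mpr (hNint x hx)⟩
  have hNAinf : N ⊓ A = A ⊓ A' := by
    apply le_antisymm
    · intro x hx
      obtain ⟨hxN, hxA⟩ := Submodule.mem_inf.mp hx
      rcases (memN x).mp hxN with h | h
      · exact h
      · exfalso
        apply ha'D
        have hwA : w ∈ A := by
          have hx2 : w = x - (x - w) := by abel
          rw [hx2]
          exact sub_mem hxA (hDleA h)
        refine Submodule.mem_inf.mpr ⟨?_, ha'A'⟩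
        have h1 : a' = w - a := by rw [hw]; abel
        rw [h1]
        exact sub_mem hwA haA
    · exact le_inf hDleN hDleA
  have hNA'inf : N ⊓ A' = A ⊓ A' := by
    apply le_antisymm
    · intro x hx
      obtain ⟨hxN, hxA'⟩ := Submodule.mem_inf.mp hx
      rcases (memN x).mp hxN with h | h
      · exact h
      · exfalso
        apply haD
        have hwA' : w ∈ A' := by
          have hx2 : w = x - (x - w) := by abel
          rw [hx2]
          exact sub_mem hxA' (hDleA' h)
        refine Submodule.mem_inf.mpr ⟨haA, ?_⟩
        have h1 : a = w - a' := by rw [hw]; abel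
        rw [h1]
        exact sub_mem hwA' ha'A'
    · exact le_inf hDleN hDleA'
  have hNbA : Neighbors N A := by
    refine ⟨?_, ?_⟩
    · rw [hNAinf]; exact hIndexDN
    · rw [hNAinf]; exact ⟨hDleA, a, haA, haD, hcovA⟩
  have hNbA' : Neighbors N A' := by
    refine ⟨?_, ?_⟩
    · rw [hNA'inf]; exact hIndexDN
    · rw [hNA'inf]; exact ⟨hDleA', a', ha'A', ha'D, hcovA'⟩
  refine ⟨N, ⟨hNlat, hNuni, hNodd, hIndexDN⟩, ?_, hNbA, hNbA', ?_⟩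
  · rintro N' ⟨hN'lat, hN'uni, hN'odd, hN'idx⟩
    rcases class_L N' hN'lat hN'idx with rfl | rfl | rfl
    · exact absurd hN'odd (not_odd_of_even _ hAeven)
    · exact absurd hN'odd (not_odd_of_even _ hA'even)
    · rfl
  · intro L
    constructor
    · rintro ⟨hLint, hLuni, hLidx⟩
      exact class_L L hLint hLidx
    · rintro (rfl | rfl | rfl)
      · exact ⟨⟨hAfg, hAsp, hAint⟩, hAuni, hDleA, a, haA, haD, hcovA⟩
      · exact ⟨⟨hA'fg, hA'sp, hA'int⟩, hA'uni, hDleA', a', ha'A', ha'D, hcovA'⟩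
      · exact ⟨hNlat, hNuni, hIndexDN⟩

end Niemeier
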